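/- Lyapunov decrease for EXP-D-RL under hypo-monotonicity: let ε > 0, γ > 0, μ > 0, consider N players with action counts n^p, n = Σ_p n^p, strategy space Δ = Π_p Δ^{n^p} ⊂ ℝⁿ, blockwise soft-max σ : ℝⁿ → ℝⁿ, and a continuous payoff map U : Δ → ℝⁿ such that −U is μ-hypo-monotone on Δ, i.e., (x − x')ᵀ(U(x) − U(x')) ≤ μ‖x − x'‖₂² for all x, x' ∈ Δ. Let z̄* ∈ ℝⁿ satisfy z̄* = U(σ(z̄*)), and define V(z) = Σ_p (lse_ε(z^p) − lse_ε(z̄*^p) − σ_ε(z̄*^p)ᵀ(z^p − z̄*^p)). Then along every differentiable solution z : ℝ → ℝⁿ of ż(t) = γ(U(σ(z(t))) − z(t)), one has d/dt V(z(t)) ≤ −γ(ε − μ)‖σ(z(t)) − σ(z̄*)‖₂² for all t. -/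

import Mathlib

open Filter

/-- The soft-max function with temperature `ε`. -/
noncomputable def softmax (ε : ℝ) {m : ℕ} (w : Fin m → ℝ) : Fin m → ℝ :=
  fun i => Real.exp (w i / ε) / ∑ j, Real.exp (w j / ε)

/-- The log-sum-exp function with temperature `ε`. -/
noncomputable def lse (ε : ℝ) {m : ℕ} (w : Fin m → ℝ) : ℝ :=
  ε * Real.log (∑ j, Real.exp (w j / ε))

/-- The blockwise soft-max `σ(z) = (σ_ε(z^p))_p`. -/
noncomputable def softmaxBlk (ε : ℝ) {N : ℕ} {nAct : Fin N → ℕ}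
    (z : ∀ p, Fin (nAct p) → ℝ) : ∀ p, Fin (nAct p) → ℝ :=
  fun p => softmax ε (z p)

/-- The strategy space `Δ = Π_p Δ^{n^p}`. -/
def simplexProd (N : ℕ) (nAct : Fin N → ℕ) : Set (∀ p, Fin (nAct p) → ℝ) :=
  {x | ∀ p, (∀ i, 0 ≤ x p i) ∧ ∑ i, x p i = 1}

/-- The Bregman-divergence storage function
`V(z) = Σ_p (lse_ε(z^p) − lse_ε(z̄^p) − σ_ε(z̄^p)ᵀ(z^p − z̄^p))`. -/
noncomputable def bregV (ε : ℝ) {N : ℕ} {nAct : Fin N → ℕ}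
    (zbar z : ∀ p, Fin (nAct p) → ℝ) : ℝ :=
  ∑ p, (lse ε (z p) - lse ε (zbar p) - ∑ i, softmax ε (zbar p) i * (z p i - zbar p i))

/-!
`V` is the Bregman divergence of `Σ_p lse_ε` between `z̄*` and `z`, and the gradient of
`lse_ε` is `σ_ε`, so along the flow `dV/dt = γ ⟨σ(z) − σ(z̄*), U(σ(z)) − z⟩`. Using
`z̄* = U(σ(z̄*))` this splits into `⟨σ(z) − σ(z̄*), U(σ(z)) − U(σ(z̄*))⟩ ≤ μ ‖σ(z) − σ(z̄*)‖²`
(hypo-monotonicity on `Δ`, which contains the image of `σ`) minus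
`⟨z − z̄*, σ(z) − σ(z̄*)⟩ ≥ ε ‖σ(z) − σ(z̄*)‖²`, the `1/ε`-cocoercivity of the soft-max.
-/

lemma Real.sub_le_log_sub_log {a b : ℝ} (hb : 0 < b) (hba : b ≤ a) (ha : a ≤ 1) :
    a - b ≤ Real.log a - Real.log b := by
  have ha₀ : 0 < a := hb.trans_le hba
  have hlog : Real.log (b / a) ≤ b / a - 1 := Real.log_le_sub_one_of_pos (div_pos hb ha₀)
  rw [Real.log_div hb.ne' ha₀.ne'] at hlog
  have hdiv : a - b ≤ (a - b) / a := by
    rw [le_div_iff₀ ha₀]; nlinarith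
  have hsplit : (a - b) / a = 1 - b / a := by field_simp
  linarith

lemma Real.sq_sub_le_log_sub_log_mul {a b : ℝ} (ha : 0 < a) (ha₁ : a ≤ 1) (hb : 0 < b)
    (hb₁ : b ≤ 1) : (a - b) ^ 2 ≤ (Real.log a - Real.log b) * (a - b) := by
  rcases le_total b a with h | h
  · nlinarith [Real.sub_le_log_sub_log hb h ha₁]
  · nlinarith [Real.sub_le_log_sub_log ha h hb₁]

section Softmax

variable {ε : ℝ} {m : ℕ}

lemma sum_exp_div_pos (hm : 0 < m) (w : Fin m → ℝ) : 0 < ∑ j, Real.exp (w j / ε) :=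
  have : Nonempty (Fin m) := ⟨⟨0, hm⟩⟩
  Finset.sum_pos (fun _ _ => Real.exp_pos _) Finset.univ_nonempty

lemma softmax_pos (hm : 0 < m) (w : Fin m → ℝ) (i : Fin m) : 0 < softmax ε w i :=
  div_pos (Real.exp_pos _) (sum_exp_div_pos hm w)

lemma softmax_le_one (hm : 0 < m) (w : Fin m → ℝ) (i : Fin m) : softmax ε w i ≤ 1 := by
  rw [softmax, div_le_one (sum_exp_div_pos hm w)]
  exact Finset.single_le_sum (f := fun j => Real.exp (w j / ε))
    (fun _ _ => (Real.exp_pos _).le) (Finset.mem_univ i)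

lemma sum_softmax (hm : 0 < m) (w : Fin m → ℝ) : ∑ i, softmax ε w i = 1 := by
  simp only [softmax]
  rw [← Finset.sum_div, div_self (sum_exp_div_pos hm w).ne']

lemma mul_log_softmax (hε : ε ≠ 0) (hm : 0 < m) (w : Fin m → ℝ) (i : Fin m) :
    ε * Real.log (softmax ε w i) = w i - lse ε w := by
  rw [softmax, lse, Real.log_div (Real.exp_pos _).ne' (sum_exp_div_pos hm w).ne', Real.log_exp,
    mul_sub, mul_div_cancel₀ _ hε]

lemma softmax_cocoercive (hε : 0 < ε) (hm : 0 < m) (w w' : Fin m → ℝ) :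
    ε * ∑ i, (softmax ε w i - softmax ε w' i) ^ 2 ≤
      ∑ i, (w i - w' i) * (softmax ε w i - softmax ε w' i) := by
  have hmass : ∑ i, (softmax ε w i - softmax ε w' i) = 0 := by
    rw [Finset.sum_sub_distrib, sum_softmax hm w, sum_softmax hm w', sub_self]
  -- `w = ε log σ_ε(w) + lse_ε(w)`, and the constant shift pairs to zero with `σ(w) − σ(w')`.
  have hlog : ∑ i, (w i - w' i) * (softmax ε w i - softmax ε w' i)
      = ε * ∑ i, (Real.log (softmax ε w i) - Real.log (softmax ε w' i)) *
          (softmax ε w i - softmax ε w' i) := by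
    have hshift : ∀ i, w i - w' i = ε * (Real.log (softmax ε w i) - Real.log (softmax ε w' i))
        + (lse ε w - lse ε w') := fun i => by
      rw [mul_sub, mul_log_softmax hε.ne' hm, mul_log_softmax hε.ne' hm]; ring
    simp only [hshift, add_mul, Finset.sum_add_distrib, mul_assoc, ← Finset.mul_sum, hmass,
      mul_zero, add_zero]
  rw [hlog]
  gcongr with i
  exact Real.sq_sub_le_log_sub_log_mul (softmax_pos hm w i) (softmax_le_one hm w i)
    (softmax_pos hm w' i) (softmax_le_one hm w' i)

lemma HasDerivAt.lse (hε : ε ≠ 0) (hm : 0 < m) {w : ℝ → Fin m → ℝ} {w' : Fin m → ℝ} {t : ℝ}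
    (hw : ∀ i, HasDerivAt (fun s => w s i) (w' i) t) :
    HasDerivAt (fun s => lse ε (w s)) (∑ i, softmax ε (w t) i * w' i) t := by
  have hsum : HasDerivAt (fun s => ∑ j, Real.exp (w s j / ε))
      (∑ j, Real.exp (w t j / ε) * (w' j / ε)) t :=
    HasDerivAt.fun_sum fun j _ => ((hw j).div_const ε).exp
  refine ((hsum.log (sum_exp_div_pos hm (w t)).ne').const_mul ε).congr_deriv ?_
  simp only [softmax, Finset.sum_div, Finset.mul_sum]
  refine Finset.sum_congr rfl fun j _ => ?_
  field_simp

end Softmax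

section Blockwise

variable {ε : ℝ} {N : ℕ} {nAct : Fin N → ℕ}

lemma softmaxBlk_mem_simplexProd (hn : ∀ p, 0 < nAct p) (w : ∀ p, Fin (nAct p) → ℝ) :
    softmaxBlk ε w ∈ simplexProd N nAct := fun p =>
  ⟨fun i => (softmax_pos (hn p) (w p) i).le, sum_softmax (hn p) (w p)⟩

lemma hasDerivAt_bregV (hε : ε ≠ 0) (hn : ∀ p, 0 < nAct p) (zbar : ∀ p, Fin (nAct p) → ℝ)
    {z : ℝ → ∀ p, Fin (nAct p) → ℝ} {z' : ∀ p, Fin (nAct p) → ℝ} {t : ℝ}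
    (hz : ∀ p i, HasDerivAt (fun s => z s p i) (z' p i) t) :
    HasDerivAt (fun s => bregV ε zbar (z s))
      (∑ p, ∑ i, (softmax ε (z t p) i - softmax ε (zbar p) i) * z' p i) t := by
  refine HasDerivAt.fun_sum fun p _ => ?_
  have hlin : HasDerivAt (fun s => ∑ i, softmax ε (zbar p) i * (z s p i - zbar p i))
      (∑ i, softmax ε (zbar p) i * z' p i) t :=
    HasDerivAt.fun_sum fun i _ => ((hz p i).sub_const _).const_mul _
  convert ((HasDerivAt.lse hε (hn p) (hz p)).sub_const (lse ε (zbar p))).fun_sub hlin using 1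
  simp only [sub_mul, Finset.sum_sub_distrib]

end Blockwise

theorem lyapunov_decrease_hypo_monotone_general (ε γ μ : ℝ) (hε : 0 < ε) (hγ : 0 < γ)
    (N : ℕ) (nAct : Fin N → ℕ) (hn : ∀ p, 0 < nAct p)
    (U : (∀ p, Fin (nAct p) → ℝ) → ∀ p, Fin (nAct p) → ℝ)
    (hU_hypo : ∀ x ∈ simplexProd N nAct, ∀ x' ∈ simplexProd N nAct,
      ∑ p, ∑ i, (x p i - x' p i) * (U x p i - U x' p i) ≤
        μ * ∑ p, ∑ i, (x p i - x' p i) ^ 2)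
    (zs : ∀ p, Fin (nAct p) → ℝ) (hzs : U (softmaxBlk ε zs) = zs)
    (z : ℝ → ∀ p, Fin (nAct p) → ℝ)
    (hz : ∀ t, ∀ p, ∀ i,
      HasDerivAt (fun s => z s p i) (γ * (U (softmaxBlk ε (z t)) p i - z t p i)) t) :
    ∀ t, deriv (fun s => bregV ε zs (z s)) t ≤
      -γ * (ε - μ) * ∑ p, ∑ i, (softmax ε (z t p) i - softmax ε (zs p) i) ^ 2 := by
  intro t
  rw [(hasDerivAt_bregV hε.ne' hn zs (hz t)).deriv]
  have hmono := hU_hypo (softmaxBlk ε (z t)) (softmaxBlk_mem_simplexProd hn _)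
    (softmaxBlk ε zs) (softmaxBlk_mem_simplexProd hn _)
  have hcoco : ε * ∑ p, ∑ i, (softmax ε (z t p) i - softmax ε (zs p) i) ^ 2 ≤
      ∑ p, ∑ i, (z t p i - zs p i) * (softmax ε (z t p) i - softmax ε (zs p) i) := by
    rw [Finset.mul_sum]
    exact Finset.sum_le_sum fun p _ => softmax_cocoercive hε (hn p) (z t p) (zs p)
  have hsplit : ∑ p, ∑ i, (softmax ε (z t p) i - softmax ε (zs p) i) *
        (γ * (U (softmaxBlk ε (z t)) p i - z t p i))
      = γ * (∑ p, ∑ i, (softmax ε (z t p) i - softmax ε (zs p) i) *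
            (U (softmaxBlk ε (z t)) p i - U (softmaxBlk ε zs) p i)
          - ∑ p, ∑ i, (z t p i - zs p i) * (softmax ε (z t p) i - softmax ε (zs p) i)) := by
    simp only [hzs, Finset.mul_sum, ← Finset.sum_sub_distrib]
    exact Finset.sum_congr rfl fun p _ => Finset.sum_congr rfl fun i _ => by ring
  simp only [softmaxBlk] at hsplit hmono
  rw [hsplit]
  nlinarith

/-- Lyapunov decrease for EXP-D-RL under `μ`-hypo-monotonicity: if `−U` is
`μ`-hypo-monotone on `Δ` and `z̄* = U(σ(z̄*))`, then along every solution of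
`ż = γ(U(σ(z)) − z)` one has `d/dt V(z(t)) ≤ −γ(ε − μ)‖σ(z(t)) − σ(z̄*)‖₂²`. -/
theorem lyapunov_decrease_hypo_monotone (ε γ μ : ℝ) (hε : 0 < ε) (hγ : 0 < γ) (hμ : 0 < μ)
    (N : ℕ) (nAct : Fin N → ℕ) (hn : ∀ p, 0 < nAct p)
    (U : (∀ p, Fin (nAct p) → ℝ) → ∀ p, Fin (nAct p) → ℝ)
    (hU_cont : ContinuousOn U (simplexProd N nAct))
    (hU_hypo : ∀ x ∈ simplexProd N nAct, ∀ x' ∈ simplexProd N nAct,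
      ∑ p, ∑ i, (x p i - x' p i) * (U x p i - U x' p i) ≤
        μ * ∑ p, ∑ i, (x p i - x' p i) ^ 2)
    (zs : ∀ p, Fin (nAct p) → ℝ) (hzs : U (softmaxBlk ε zs) = zs)
    (z : ℝ → ∀ p, Fin (nAct p) → ℝ)
    (hz : ∀ t, ∀ p, ∀ i,
      HasDerivAt (fun s => z s p i) (γ * (U (softmaxBlk ε (z t)) p i - z t p i)) t) :
    ∀ t, deriv (fun s => bregV ε zs (z s)) t ≤
      -γ * (ε - μ) * ∑ p, ∑ i, (softmax ε (z t p) i - softmax ε (zs p) i) ^ 2 :=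
  lyapunov_decrease_hypo_monotone_general ε γ μ hε hγ N nAct hn U hU_hypo zs hzs z hz
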